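/- arXiv:nlin/0408020 — 4 statements merged into one kernel-verified Lean document; each statement's English description precedes it below -/
import Mathlib

section
/- Let Γ, ω₀, χ₀ > 0 with Γ² − 4ω₀² < 0. For all real p and all ε > 0, every complex root s of the quartic polynomial Q(s; p, ε) = (s² + εΓs + ε²ω₀²)(p² + s²) + ε²χ₀ s² has non-positive real part. -/
noncomputable section

/-- The quartic polynomial `Q(s; p, ε) = (s² + εΓs + ε²ω₀²)(p² + s²) + ε²χ₀ s²`,
viewed as a function of the complex variable `s`. -/
def Qf (Γ ω₀ χ₀ ε p : ℝ) (s : ℂ) : ℂ :=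
  (s ^ 2 + (ε : ℂ) * (Γ : ℂ) * s + (ε : ℂ) ^ 2 * (ω₀ : ℂ) ^ 2) * ((p : ℂ) ^ 2 + s ^ 2)
    + (ε : ℂ) ^ 2 * (χ₀ : ℂ) * s ^ 2

/-- Lemma (non-positivity of the real parts): for all real `p` and all `ε > 0`, every
complex root of `Q(·; p, ε)` has non-positive real part. -/
theorem statement2 (Γ ω₀ χ₀ : ℝ) (hΓ : 0 < Γ) (hω₀ : 0 < ω₀) (hχ₀ : 0 < χ₀)
    (hdisc : Γ ^ 2 - 4 * ω₀ ^ 2 < 0) :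
    ∀ p : ℝ, ∀ ε : ℝ, 0 < ε → ∀ s : ℂ, Qf Γ ω₀ χ₀ ε p s = 0 → s.re ≤ 0 := by
  intro p ε hε s hQ
  by_contra hre
  push_neg at hre
  set a := s.re with ha
  set b := s.im with hb
  have hs : s = (a : ℂ) + (b : ℂ) * Complex.I := (Complex.re_add_im s).symm
  rw [hs] at hQ
  rw [Qf, Complex.ext_iff] at hQ
  simp only [Complex.add_re, Complex.add_im, Complex.mul_re, Complex.mul_im,
    Complex.ofReal_re, Complex.ofReal_im, Complex.I_re, Complex.I_im,
    Complex.zero_re, Complex.zero_im, pow_two] at hQ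
  obtain ⟨hRe, hIm⟩ := hQ
  -- multiply Q = 0 by conj(s² + εΓs + ε²ω₀²) and take imaginary parts
  have key : b * (2 * a * ((a * a - b * b + ε * Γ * a + ε ^ 2 * ω₀ ^ 2) ^ 2
      + (b * (2 * a + ε * Γ)) ^ 2) + ε ^ 3 * χ₀ * Γ * (a ^ 2 + b ^ 2)
      + 2 * ε ^ 4 * χ₀ * ω₀ ^ 2 * a) = 0 := by
    linear_combination (a * a - b * b + ε * Γ * a + ε ^ 2 * ω₀ ^ 2) * hIm
      - (b * (2 * a + ε * Γ)) * hRe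
  have hfac : 0 < 2 * a * ((a * a - b * b + ε * Γ * a + ε ^ 2 * ω₀ ^ 2) ^ 2
      + (b * (2 * a + ε * Γ)) ^ 2) + ε ^ 3 * χ₀ * Γ * (a ^ 2 + b ^ 2)
      + 2 * ε ^ 4 * χ₀ * ω₀ ^ 2 * a := by
    have h1 : 0 < ε ^ 3 * χ₀ * Γ * (a ^ 2 + b ^ 2) := by positivity
    have h2 : 0 < 2 * ε ^ 4 * χ₀ * ω₀ ^ 2 * a := by positivity
    have h3 : 0 ≤ 2 * a * ((a * a - b * b + ε * Γ * a + ε ^ 2 * ω₀ ^ 2) ^ 2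
      + (b * (2 * a + ε * Γ)) ^ 2) := by positivity
    linarith
  have hb0 : b = 0 := by
    rcases mul_eq_zero.mp key with h | h
    · exact h
    · exact absurd h (ne_of_gt hfac)
  rw [hb0] at hRe
  nlinarith [hRe, pow_pos hre 4, mul_pos (mul_pos hε hΓ) (mul_pos (mul_pos hre hre) hre),
    mul_pos hε hΓ, sq_nonneg p, sq_nonneg (p * a), mul_pos hε hε, sq_nonneg (ε * ω₀ * p),
    mul_pos (mul_pos hε hε) (mul_pos hχ₀ (mul_pos hre hre)),
    mul_nonneg (mul_nonneg hε.le hΓ.le) (mul_nonneg (sq_nonneg p) hre.le)]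
end
end

section
/- Let Γ, ω₀, χ₀ > 0 with Γ² − 4ω₀² < 0. There exist ε₀ > 0 and constants C₀, C₁ > 0 such that for all 0 < ε < ε₀ and all p > C₀ ε, the quartic polynomial Q(s; p, ε) = (s² + εΓs + ε²ω₀²)(p² + s²) + ε²χ₀ s² has a pair of roots of the form s⁰_± = −(ε/2)(Γ ± √(Γ² − 4ω₀²)) + ε σ⁰_±(p), where the correction terms satisfy |σ⁰_±(p)| ≤ C₁ ε² / p². (Since Γ² − 4ω₀² < 0, the square root √(Γ² − 4ω₀²) is purely imaginary and the two roots are complex conjugates.) -/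
/-!
Put `s = εz` and `δ = (ε/p)²`. Then `Q(εz) = ε²p² ((z - z₀)(z - z₁)(1 + δz²) + δχ₀z²)`, where
`z₀, z₁ = -(Γ ± i√(4ω₀² - Γ²))/2` are the distinct roots of `z² + Γz + ω₀²`. Near the simple
root `z₀` the equation `Q(εz) = 0` is the fixed-point equation
`z - z₀ = -δχ₀z² / ((z - z₁)(1 + δz²))`, whose right-hand side is holomorphic and `O(δ)` on the
disc of radius `|z₁ - z₀|/2` about `z₀`. By Cauchy's estimate it is then a contraction of the
concentric disc of half that radius, so Banach's theorem gives a root with `z - z₀ = O(δ) = O(ε²/p²)`. Since `Q` has real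
coefficients, the conjugate root is the other member of the pair.
-/

noncomputable section

open Metric Set ComplexConjugate

theorem Complex.norm_image_sub_le_of_forall_mem_closedBall_norm_le {F : Type*}
    [NormedAddCommGroup F] [NormedSpace ℂ F] {f : ℂ → F} {c z w : ℂ} {R B : ℝ} (hR : 0 < R)
    (hf : DifferentiableOn ℂ f (closedBall c R)) (hB : ∀ x ∈ closedBall c R, ‖f x‖ ≤ B)
    (hz : z ∈ closedBall c (R / 2)) (hw : w ∈ closedBall c (R / 2)) :
    ‖f z - f w‖ ≤ 2 * B / R * ‖z - w‖ := by
  have hsub : ∀ x ∈ closedBall c (R / 2), closedBall x (R / 2) ⊆ closedBall c R := fun x hx =>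
    closedBall_subset_closedBall' (by rw [mem_closedBall] at hx; linarith)
  refine (convex_closedBall c (R / 2)).norm_image_sub_le_of_norm_deriv_le
    (fun x hx => hf.differentiableAt (Filter.mem_of_superset (closedBall_mem_nhds x (half_pos hR))
      (hsub x hx))) (fun x hx => ?_) hw hz
  have := Complex.norm_deriv_le_of_forall_mem_sphere_norm_le (half_pos hR)
    (hf.diffContOnCl_ball (hsub x hx)) fun y hy => hB y (hsub x hx (sphere_subset_closedBall hy))
  rwa [div_div_eq_mul_div, mul_comm] at this

theorem LipschitzOnWith.exists_mem_isFixedPt {α : Type*} [MetricSpace α] [CompleteSpace α]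
    {f : α → α} {s : Set α} {K : NNReal} {x : α} (hf : LipschitzOnWith K f s) (hK : K < 1)
    (hs : IsClosed s) (hx : x ∈ s) (hsf : MapsTo f s s) : ∃ y ∈ s, Function.IsFixedPt f y := by
  obtain ⟨y, hys, hy, -⟩ := ContractingWith.exists_fixedPoint' hs.isComplete hsf
    ⟨hK, hf.mapsToRestrict hsf⟩ hx (edist_ne_top x (f x))
  exact ⟨y, hys, hy⟩

theorem Complex.exists_fixedPoint_of_forall_mem_closedBall_norm_le {f : ℂ → ℂ} {R B : ℝ}
    (hR : 0 < R) (hf : DifferentiableOn ℂ f (closedBall 0 R))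
    (hB : ∀ z ∈ closedBall 0 R, ‖f z‖ ≤ B) (hBR : 4 * B ≤ R) : ∃ z, ‖z‖ ≤ B ∧ f z = z := by
  have hB0 : 0 ≤ B := (norm_nonneg _).trans (hB 0 (mem_closedBall_self hR.le))
  have hmaps : MapsTo f (closedBall 0 (R / 2)) (closedBall 0 (R / 2)) := fun z hz => by
    have := hB z (closedBall_subset_closedBall (by linarith) hz)
    rw [mem_closedBall_zero_iff]; linarith
  have hlip : LipschitzOnWith (1 / 2) f (closedBall 0 (R / 2)) := by
    refine LipschitzOnWith.of_dist_le_mul fun z hz w hw => ?_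
    rw [dist_eq_norm, dist_eq_norm]
    refine (Complex.norm_image_sub_le_of_forall_mem_closedBall_norm_le hR hf hB hz hw).trans ?_
    gcongr
    rw [div_le_iff₀ hR]; push_cast; linarith
  obtain ⟨z, hz, hfz⟩ := hlip.exists_mem_isFixedPt (by norm_num) isClosed_closedBall
    (mem_closedBall_self (by linarith)) hmaps
  exact ⟨z, hfz ▸ hB z (closedBall_subset_closedBall (by linarith) hz), hfz⟩

theorem le_norm_sub_mul_one_add_mul_sq {z₀ z₁ δ σ : ℂ} (hσ : ‖σ‖ ≤ ‖z₁ - z₀‖ / 2)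
    (hδ : ‖δ‖ * (‖z₀‖ + ‖z₁ - z₀‖ / 2) ^ 2 ≤ 1 / 2) :
    ‖z₁ - z₀‖ / 4 ≤ ‖(z₀ + σ - z₁) * (1 + δ * (z₀ + σ) ^ 2)‖ := by
  have hroot : ‖z₁ - z₀‖ / 2 ≤ ‖z₀ + σ - z₁‖ := by
    have := norm_sub_norm_le (z₁ - z₀) σ
    rw [show z₁ - z₀ - σ = -(z₀ + σ - z₁) by ring, norm_neg] at this
    linarith
  have hfactor : 1 / 2 ≤ ‖1 + δ * (z₀ + σ) ^ 2‖ := by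
    have h1 := norm_sub_norm_le 1 (-(δ * (z₀ + σ) ^ 2))
    rw [sub_neg_eq_add, norm_neg, norm_one, norm_mul, norm_pow] at h1
    have h2 : ‖δ‖ * ‖z₀ + σ‖ ^ 2 ≤ ‖δ‖ * (‖z₀‖ + ‖z₁ - z₀‖ / 2) ^ 2 := by
      gcongr; exact (norm_add_le _ _).trans (by linarith)
    linarith
  rw [norm_mul]
  calc ‖z₁ - z₀‖ / 4 = ‖z₁ - z₀‖ / 2 * (1 / 2) := by ring
    _ ≤ ‖z₀ + σ - z₁‖ * ‖1 + δ * (z₀ + σ) ^ 2‖ := by gcongr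

theorem exists_root_near_of_perturbed_quadratic (z₀ z₁ χ : ℂ) (hz : z₀ ≠ z₁) (hχ : χ ≠ 0) :
    ∃ C > 0, ∃ δ₀ > 0, ∀ δ : ℂ, ‖δ‖ < δ₀ → ∃ z, ‖z - z₀‖ ≤ C * ‖δ‖ ∧
      (z - z₀) * (z - z₁) * (1 + δ * z ^ 2) + δ * χ * z ^ 2 = 0 := by
  set d := ‖z₁ - z₀‖
  set M := ‖z₀‖ + d / 2
  have hd : 0 < d := norm_pos_iff.2 (sub_ne_zero.2 hz.symm)
  have hM : 0 < M := by positivity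
  set C := 4 * ‖χ‖ * M ^ 2 / d
  refine ⟨C, by positivity, min (1 / (2 * M ^ 2)) (d / (8 * C)), by positivity, fun δ hδ => ?_⟩
  have hδM : ‖δ‖ * M ^ 2 ≤ 1 / 2 := by
    have := (lt_min_iff.1 hδ).1
    rw [lt_div_iff₀ (by positivity)] at this; linarith
  have hδC : 4 * (C * ‖δ‖) ≤ d / 2 := by
    have := (lt_min_iff.1 hδ).2
    rw [lt_div_iff₀ (by positivity)] at this; linarith
  have hden : ∀ σ ∈ closedBall (0 : ℂ) (d / 2),
      d / 4 ≤ ‖(z₀ + σ - z₁) * (1 + δ * (z₀ + σ) ^ 2)‖ := fun σ hσ =>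
    le_norm_sub_mul_one_add_mul_sq (mem_closedBall_zero_iff.1 hσ) hδM
  have hden_ne : ∀ σ ∈ closedBall (0 : ℂ) (d / 2),
      (z₀ + σ - z₁) * (1 + δ * (z₀ + σ) ^ 2) ≠ 0 := fun σ hσ =>
    norm_pos_iff.1 ((by positivity : 0 < d / 4).trans_le (hden σ hσ))
  set f : ℂ → ℂ := fun σ => -(δ * χ * (z₀ + σ) ^ 2) / ((z₀ + σ - z₁) * (1 + δ * (z₀ + σ) ^ 2))
  have hfB : ∀ σ ∈ closedBall (0 : ℂ) (d / 2), ‖f σ‖ ≤ C * ‖δ‖ := fun σ hσ => by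
    have hw : ‖z₀ + σ‖ ≤ M := (norm_add_le _ _).trans (by
      rw [mem_closedBall_zero_iff] at hσ; linarith [show M = ‖z₀‖ + d / 2 from rfl])
    simp only [f, norm_div, norm_neg, norm_mul (δ * χ), norm_mul δ, norm_pow]
    calc ‖δ‖ * ‖χ‖ * ‖z₀ + σ‖ ^ 2 / ‖(z₀ + σ - z₁) * (1 + δ * (z₀ + σ) ^ 2)‖
        ≤ ‖δ‖ * ‖χ‖ * M ^ 2 / (d / 4) := by gcongr; exact hden σ hσ
      _ = C * ‖δ‖ := by simp only [C]; field_simp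
  obtain ⟨σ, hσ, hfσ⟩ := Complex.exists_fixedPoint_of_forall_mem_closedBall_norm_le (half_pos hd)
    (fun σ hσ => by fun_prop (disch := exact hden_ne σ hσ)) hfB hδC
  refine ⟨z₀ + σ, by simpa using hσ, ?_⟩
  have hσd : σ ∈ closedBall (0 : ℂ) (d / 2) :=
    mem_closedBall_zero_iff.2 (by linarith [norm_nonneg δ])
  linear_combination -(div_eq_iff (hden_ne σ hσd)).1 hfσ

theorem Qf_conj (Γ ω₀ χ₀ ε p : ℝ) (s : ℂ) : Qf Γ ω₀ χ₀ ε p (conj s) = conj (Qf Γ ω₀ χ₀ ε p s) := by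
  simp only [Qf, map_add, map_mul, map_pow, Complex.conj_ofReal]

theorem Qf_ofReal_mul {Γ ω₀ χ₀ ε p : ℝ} {z₀ z₁ : ℂ} (hsum : z₀ + z₁ = -Γ) (hprod : z₀ * z₁ = ω₀ ^ 2)
    (hp : p ≠ 0) (z : ℂ) :
    Qf Γ ω₀ χ₀ ε p (ε * z) = (ε * p) ^ 2 * ((z - z₀) * (z - z₁) * (1 + ((ε / p) ^ 2 : ℝ) * z ^ 2)
      + ((ε / p) ^ 2 : ℝ) * χ₀ * z ^ 2) := by
  have hquad : z ^ 2 + Γ * z + ω₀ ^ 2 = (z - z₀) * (z - z₁) := by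
    linear_combination z * hsum - hprod
  have hp' : (p : ℂ) ≠ 0 := Complex.ofReal_ne_zero.2 hp
  simp only [Qf]
  push_cast
  field_simp
  linear_combination (ε : ℂ) ^ 2 * (p ^ 2 + ε ^ 2 * z ^ 2) * hquad

theorem exists_Qf_eq_zero_near {Γ ω₀ χ₀ : ℝ} {z₀ z₁ : ℂ} (hsum : z₀ + z₁ = -Γ)
    (hprod : z₀ * z₁ = ω₀ ^ 2) (hz : z₀ ≠ z₁) (hχ₀ : χ₀ ≠ 0) :
    ∃ C₀ > (0 : ℝ), ∃ C₁ > (0 : ℝ), ∀ ε p : ℝ, 0 < ε → C₀ * ε < p →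
      ∃ z, ‖z - z₀‖ ≤ C₁ * ε ^ 2 / p ^ 2 ∧ Qf Γ ω₀ χ₀ ε p (ε * z) = 0 := by
  obtain ⟨C, hC, δ₀, hδ₀, hroot⟩ :=
    exists_root_near_of_perturbed_quadratic z₀ z₁ χ₀ hz (Complex.ofReal_ne_zero.2 hχ₀)
  refine ⟨1 / √δ₀, by positivity, C, hC, fun ε p hε hp => ?_⟩
  have hp0 : 0 < p := (by positivity : 0 < 1 / √δ₀ * ε).trans hp
  have hδ : ‖(((ε / p) ^ 2 : ℝ) : ℂ)‖ < δ₀ := by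
    rw [Complex.norm_real, Real.norm_of_nonneg (by positivity), ← Real.lt_sqrt (by positivity),
      div_lt_iff₀ hp0]
    rwa [one_div_mul_eq_div, div_lt_iff₀' (by positivity)] at hp
  obtain ⟨z, hz, hQ⟩ := hroot _ hδ
  refine ⟨z, ?_, by rw [Qf_ofReal_mul hsum hprod hp0.ne', hQ, mul_zero]⟩
  rwa [Complex.norm_real, Real.norm_of_nonneg (by positivity), div_pow, ← mul_div_assoc] at hz

theorem statement3_general (Γ ω₀ χ₀ : ℝ) (hχ₀ : 0 < χ₀)
    (hdisc : Γ ^ 2 - 4 * ω₀ ^ 2 < 0) :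
    ∃ ε₀ > (0 : ℝ), ∃ C₀ > (0 : ℝ), ∃ C₁ > (0 : ℝ),
      ∀ ε : ℝ, 0 < ε → ε < ε₀ → ∀ p : ℝ, C₀ * ε < p →
        ∃ σp σm : ℂ,
          Qf Γ ω₀ χ₀ ε p
              (-((ε / 2 : ℝ) : ℂ) * ((Γ : ℂ) + Complex.I * (Real.sqrt (4 * ω₀ ^ 2 - Γ ^ 2) : ℂ))
                + (ε : ℂ) * σp) = 0 ∧
          Qf Γ ω₀ χ₀ ε p
              (-((ε / 2 : ℝ) : ℂ) * ((Γ : ℂ) - Complex.I * (Real.sqrt (4 * ω₀ ^ 2 - Γ ^ 2) : ℂ))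
                + (ε : ℂ) * σm) = 0 ∧
          ‖σp‖ ≤ C₁ * ε ^ 2 / p ^ 2 ∧ ‖σm‖ ≤ C₁ * ε ^ 2 / p ^ 2 ∧
          -- the two roots are complex conjugates of one another
          (-((ε / 2 : ℝ) : ℂ) * ((Γ : ℂ) - Complex.I * (Real.sqrt (4 * ω₀ ^ 2 - Γ ^ 2) : ℂ))
                + (ε : ℂ) * σm)
            = starRingEnd ℂ
              (-((ε / 2 : ℝ) : ℂ) * ((Γ : ℂ) + Complex.I * (Real.sqrt (4 * ω₀ ^ 2 - Γ ^ 2) : ℂ))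
                + (ε : ℂ) * σp) := by
  set Δ := Real.sqrt (4 * ω₀ ^ 2 - Γ ^ 2)
  have hΔ : 0 < Δ := Real.sqrt_pos.2 (by linarith)
  have hΔsq : (Δ : ℂ) ^ 2 = 4 * ω₀ ^ 2 - Γ ^ 2 := by exact_mod_cast Real.sq_sqrt (by linarith)
  set z₀ : ℂ := -(Γ + Complex.I * Δ) / 2
  set z₁ : ℂ := -(Γ - Complex.I * Δ) / 2
  have hne : z₀ ≠ z₁ := fun h => by
    have : Complex.I * Δ = 0 := by linear_combination -h
    simp [hΔ.ne'] at this
  obtain ⟨C₀, hC₀, C₁, hC₁, hroot⟩ := exists_Qf_eq_zero_near (Γ := Γ) (ω₀ := ω₀) (by ring)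
    (by linear_combination (-(Δ : ℂ) ^ 2 / 4) * Complex.I_sq + (1 / 4 : ℂ) * hΔsq) hne hχ₀.ne'
  refine ⟨1, one_pos, C₀, hC₀, C₁, hC₁, fun ε hε _ p hp => ?_⟩
  obtain ⟨z, hbound, hQz⟩ := hroot ε p hε hp
  have hplus : -((ε / 2 : ℝ) : ℂ) * (Γ + Complex.I * Δ) + ε * (z - z₀) = ε * z := by
    simp only [z₀]; push_cast; ring
  have hminus : -((ε / 2 : ℝ) : ℂ) * (Γ - Complex.I * Δ) + ε * conj (z - z₀) = conj (ε * z) := by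
    simp only [z₀, map_mul, map_sub, map_div₀, map_neg, map_add, Complex.conj_ofReal,
      Complex.conj_I, map_ofNat]
    push_cast; ring
  refine ⟨z - z₀, conj (z - z₀), ?_, ?_, hbound, by rwa [Complex.norm_conj], by rw [hminus, hplus]⟩
  · rw [hplus, hQz]
  · rw [hminus, Qf_conj, hQz, map_zero]

/-- Lemma (the damped pair of roots): for `0 < ε < ε₀` and `p > C₀ ε`, the quartic `Q`
has a pair of complex-conjugate roots
`s⁰_± = −(ε/2)(Γ ± i√(4ω₀² − Γ²)) + ε σ⁰_±(p)` with `|σ⁰_±(p)| ≤ C₁ ε²/p²`.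
(Here `√(Γ² − 4ω₀²) = i√(4ω₀² − Γ²)` is purely imaginary since `Γ² − 4ω₀² < 0`.) -/
theorem statement3 (Γ ω₀ χ₀ : ℝ) (hΓ : 0 < Γ) (hω₀ : 0 < ω₀) (hχ₀ : 0 < χ₀)
    (hdisc : Γ ^ 2 - 4 * ω₀ ^ 2 < 0) :
    ∃ ε₀ > (0 : ℝ), ∃ C₀ > (0 : ℝ), ∃ C₁ > (0 : ℝ),
      ∀ ε : ℝ, 0 < ε → ε < ε₀ → ∀ p : ℝ, C₀ * ε < p →
        ∃ σp σm : ℂ,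
          Qf Γ ω₀ χ₀ ε p
              (-((ε / 2 : ℝ) : ℂ) * ((Γ : ℂ) + Complex.I * (Real.sqrt (4 * ω₀ ^ 2 - Γ ^ 2) : ℂ))
                + (ε : ℂ) * σp) = 0 ∧
          Qf Γ ω₀ χ₀ ε p
              (-((ε / 2 : ℝ) : ℂ) * ((Γ : ℂ) - Complex.I * (Real.sqrt (4 * ω₀ ^ 2 - Γ ^ 2) : ℂ))
                + (ε : ℂ) * σm) = 0 ∧
          ‖σp‖ ≤ C₁ * ε ^ 2 / p ^ 2 ∧ ‖σm‖ ≤ C₁ * ε ^ 2 / p ^ 2 ∧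
          -- the two roots are complex conjugates of one another
          (-((ε / 2 : ℝ) : ℂ) * ((Γ : ℂ) - Complex.I * (Real.sqrt (4 * ω₀ ^ 2 - Γ ^ 2) : ℂ))
                + (ε : ℂ) * σm)
            = starRingEnd ℂ
              (-((ε / 2 : ℝ) : ℂ) * ((Γ : ℂ) + Complex.I * (Real.sqrt (4 * ω₀ ^ 2 - Γ ^ 2) : ℂ))
                + (ε : ℂ) * σp) :=
  statement3_general Γ ω₀ χ₀ hχ₀ hdisc
end
end

section
/- Let Γ, ω₀, χ₀ > 0 with Γ² − 4ω₀² < 0. For every real p ≠ 0 and every ε > 0, the quartic polynomial Q(s; p, ε) = (s² + εΓs + ε²ω₀²)(p² + s²) + ε²χ₀ s² has no purely imaginary root; that is, there is no real x with Q(ix; p, ε) = 0. -/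
noncomputable section

/-- Lemma (no purely imaginary roots): for every real `p ≠ 0` and every `ε > 0`, the
quartic `Q(·; p, ε)` has no purely imaginary root, i.e. no root of the form `ix` with
`x` real. -/
theorem statement7 (Γ ω₀ χ₀ : ℝ) (hΓ : 0 < Γ) (hω₀ : 0 < ω₀) (hχ₀ : 0 < χ₀)
    (hdisc : Γ ^ 2 - 4 * ω₀ ^ 2 < 0) :
    ∀ p : ℝ, p ≠ 0 → ∀ ε : ℝ, 0 < ε →
      ∀ x : ℝ, Qf Γ ω₀ χ₀ ε p (Complex.I * (x : ℂ)) ≠ 0 := by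
  intro p hp ε hε x h
  have key : Qf Γ ω₀ χ₀ ε p (Complex.I * (x : ℂ)) =
      (((ε^2*ω₀^2 - x^2)*(p^2 - x^2) - ε^2*χ₀*x^2 : ℝ) : ℂ)
        + (((ε*Γ*x*(p^2 - x^2)) : ℝ) : ℂ) * Complex.I := by
    simp only [Qf]
    push_cast
    linear_combination (((x:ℂ)^2*((p:ℂ)^2 - (x:ℂ)^2) + ((ε:ℂ)^2*(ω₀:ℂ)^2 - (x:ℂ)^2
      + (ε:ℂ)*(Γ:ℂ)*(x:ℂ)*Complex.I)*(x:ℂ)^2 + (ε:ℂ)^2*(χ₀:ℂ)*(x:ℂ)^2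
      + (x:ℂ)^4*(Complex.I^2 + 1)) : ℂ) * Complex.I_sq
  rw [key, Complex.ext_iff] at h
  simp only [Complex.add_re, Complex.add_im, Complex.mul_re, Complex.mul_im,
    Complex.ofReal_re, Complex.ofReal_im, Complex.I_re, Complex.I_im, Complex.zero_re,
    Complex.zero_im, mul_zero, zero_mul, mul_one, sub_zero, zero_add, add_zero, zero_sub] at h
  obtain ⟨hre, him⟩ := h
  have hp2 : 0 < p^2 := by positivity
  have h2 : x * (p^2 - x^2) = 0 := by
    have hεΓ : (ε * Γ) ≠ 0 := by positivity
    have : ε * Γ * (x * (p^2 - x^2)) = 0 := by linear_combination him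
    exact (mul_eq_zero.mp this).resolve_left hεΓ
  rcases mul_eq_zero.mp h2 with h0 | h0
  · subst h0
    nlinarith [mul_pos (mul_pos (pow_pos hε 2) (pow_pos hω₀ 2)) hp2]
  · have hx2 : x^2 = p^2 := by linarith
    have h3 : ε^2*χ₀*x^2 = 0 := by linear_combination (ε^2*ω₀^2 - x^2)*h0 - hre
    nlinarith [mul_pos (mul_pos (pow_pos hε 2) hχ₀) hp2]
end
end

section
/- Let χ₀ > 0, ε > 0, and let Ĉ, Ŝ : [0,∞) → ℝ be continuous functions such that p ↦ (1 + p)·|Ĉ(ω_ε(p))| and p ↦ (1 + p)·|Ŝ(ω_ε(p))| are integrable on [√ε, ∞), where ω_ε(p) = √(p² + ε²χ₀). Then the function 𝒰(φ,T) = (1/π) ∫_{√ε}^∞ (p/ω_ε(p)) [cos(pφ − χ₀T/(2p)) Ĉ(ω_ε(p)) + sin(pφ − χ₀T/(2p)) Ŝ(ω_ε(p))] dp is well defined, has continuous mixed partial derivative ∂_φ∂_T 𝒰, and satisfies the linearized short-pulse equation 2 ∂_φ ∂_T 𝒰(φ,T) = χ₀ 𝒰(φ,T) for all (φ,T). -/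
/-!
Each mode `cos θ`, `sin θ` with phase `θ = p φ - χ₀ T / (2 p)` solves the equation on its own:
`∂_T` brings down the factor `-χ₀ / (2 p)` and `∂_φ` the factor `p`, so `2 ∂_φ ∂_T = χ₀`.
On `(√ε, ∞)` the coefficients `(p / ω) Ĉ(ω)` and their quotients by `p` are dominated by
multiples of `(1 + p) |Ĉ(ω)|`, so both derivatives may be taken under the integral; the mixed
derivative is then `(χ₀ / 2) 𝒰`, continuous by dominated convergence.
-/

open MeasureTheory Set

noncomputable section

/-- The dispersion relation `ω_ε(p) = √(p² + ε²χ₀)`. -/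
def omg (χ₀ ε p : ℝ) : ℝ := Real.sqrt (p ^ 2 + ε ^ 2 * χ₀)

def osc (C S θ : ℝ) : ℝ := Real.cos θ * C + Real.sin θ * S

theorem hasDerivAt_osc (C S θ : ℝ) : HasDerivAt (osc C S) (osc S (-C) θ) θ := by
  unfold osc
  exact (((Real.hasDerivAt_cos θ).mul_const C).add
    ((Real.hasDerivAt_sin θ).mul_const S)).congr_deriv (by ring)

theorem abs_osc_le (C S θ : ℝ) : |osc C S θ| ≤ |C| + |S| := by
  unfold osc
  calc |Real.cos θ * C + Real.sin θ * S| ≤ |Real.cos θ| * |C| + |Real.sin θ| * |S| := by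
        simpa only [abs_mul] using abs_add_le (Real.cos θ * C) (Real.sin θ * S)
    _ ≤ 1 * |C| + 1 * |S| := by
        gcongr
        exacts [Real.abs_cos_le_one θ, Real.abs_sin_le_one θ]
    _ = |C| + |S| := by ring

theorem osc_const_mul (c C S θ : ℝ) : osc (c * C) (c * S) θ = c * osc C S θ := by
  simp only [osc]
  ring

section Integrability

variable {α : Type*} [MeasurableSpace α] {μ : Measure α} {a b θ : α → ℝ}

theorem aestronglyMeasurable_osc (ha : AEStronglyMeasurable a μ)
    (hb : AEStronglyMeasurable b μ) (hθ : Measurable θ) :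
    AEStronglyMeasurable (fun x => osc (a x) (b x) (θ x)) μ :=
  ((Real.continuous_cos.measurable.comp hθ).aestronglyMeasurable.mul ha).add
    ((Real.continuous_sin.measurable.comp hθ).aestronglyMeasurable.mul hb)

theorem integrable_osc (ha : Integrable a μ) (hb : Integrable b μ) (hθ : Measurable θ) :
    Integrable (fun x => osc (a x) (b x) (θ x)) μ :=
  (ha.abs.add hb.abs).mono' (aestronglyMeasurable_osc ha.1 hb.1 hθ)
    (ae_of_all _ fun _ => abs_osc_le _ _ _)

end Integrability

def wavePhase (χ₀ p φ T : ℝ) : ℝ := p * φ - χ₀ * T / (2 * p)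

theorem measurable_wavePhase (χ₀ φ T : ℝ) : Measurable fun p => wavePhase χ₀ p φ T := by
  unfold wavePhase
  fun_prop

theorem continuous_wavePhase (χ₀ p : ℝ) :
    Continuous fun q : ℝ × ℝ => wavePhase χ₀ p q.1 q.2 := by
  unfold wavePhase
  fun_prop

theorem hasDerivAt_wavePhase_fst (χ₀ p φ T : ℝ) :
    HasDerivAt (fun φ => wavePhase χ₀ p φ T) p φ := by
  unfold wavePhase
  simpa using ((hasDerivAt_id φ).const_mul p).sub_const (χ₀ * T / (2 * p))

theorem hasDerivAt_wavePhase_snd (χ₀ p φ T : ℝ) :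
    HasDerivAt (fun T => wavePhase χ₀ p φ T) (-(χ₀ / (2 * p))) T := by
  unfold wavePhase
  simpa [neg_div, mul_div_assoc] using
    (((hasDerivAt_id T).const_mul χ₀).div_const (2 * p)).const_sub (p * φ)

def waveSuperposition (μ : Measure ℝ) (χ₀ : ℝ) (a b : ℝ → ℝ) (φ T : ℝ) : ℝ :=
  ∫ p, osc (a p) (b p) (wavePhase χ₀ p φ T) ∂μ

section Superposition

variable {μ : Measure ℝ} {χ₀ : ℝ} {a b : ℝ → ℝ}

theorem waveSuperposition_const_mul (c : ℝ) (φ T : ℝ) :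
    waveSuperposition μ χ₀ (fun p => c * a p) (fun p => c * b p) φ T
      = c * waveSuperposition μ χ₀ a b φ T := by
  simp only [waveSuperposition, osc_const_mul, integral_const_mul]

theorem waveSuperposition_congr_ae {a' b' : ℝ → ℝ} (ha : a =ᵐ[μ] a') (hb : b =ᵐ[μ] b')
    (φ T : ℝ) : waveSuperposition μ χ₀ a b φ T = waveSuperposition μ χ₀ a' b' φ T :=
  integral_congr_ae (by filter_upwards [ha, hb] with p hap hbp; rw [hap, hbp])

theorem continuous_waveSuperposition (ha : Integrable a μ) (hb : Integrable b μ) :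
    Continuous fun q : ℝ × ℝ => waveSuperposition μ χ₀ a b q.1 q.2 :=
  continuous_of_dominated
    (fun q => aestronglyMeasurable_osc ha.1 hb.1 (measurable_wavePhase χ₀ q.1 q.2))
    (fun q => ae_of_all _ fun p => abs_osc_le _ _ _) (ha.abs.add hb.abs)
    (ae_of_all _ fun p => by unfold osc; have := continuous_wavePhase χ₀ p; fun_prop)

theorem hasDerivAt_waveSuperposition_fst (ha : Integrable a μ) (hb : Integrable b μ)
    (ha' : Integrable (fun p => p * a p) μ) (hb' : Integrable (fun p => p * b p) μ)
    (φ T : ℝ) :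
    HasDerivAt (fun φ => waveSuperposition μ χ₀ a b φ T)
      (waveSuperposition μ χ₀ (fun p => p * b p) (fun p => -(p * a p)) φ T) φ := by
  refine (hasDerivAt_integral_of_dominated_loc_of_deriv_le Filter.univ_mem
    (F := fun φ p => osc (a p) (b p) (wavePhase χ₀ p φ T))
    (F' := fun φ p => osc (p * b p) (-(p * a p)) (wavePhase χ₀ p φ T))
    (bound := fun p => |p * b p| + |p * a p|)
    (.of_forall fun φ => aestronglyMeasurable_osc ha.1 hb.1 (measurable_wavePhase χ₀ φ T))
    (integrable_osc ha hb (measurable_wavePhase χ₀ φ T))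
    (aestronglyMeasurable_osc hb'.1 ha'.1.neg (measurable_wavePhase χ₀ φ T))
    (ae_of_all _ fun p φ _ => ?_) (hb'.abs.add ha'.abs) (ae_of_all _ fun p φ _ => ?_)).2
  · simpa only [Real.norm_eq_abs, abs_neg] using abs_osc_le (p * b p) (-(p * a p)) _
  · exact ((hasDerivAt_osc (a p) (b p) _).comp φ (hasDerivAt_wavePhase_fst χ₀ p φ T)).congr_deriv
      (by unfold osc; ring)

theorem MeasureTheory.Integrable.const_div_two_mul {c : ℝ → ℝ}
    (hc : Integrable (fun p => c p / p) μ) (χ₀ : ℝ) : Integrable (fun p => χ₀ / (2 * p) * c p) μ :=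
  (hc.const_mul (χ₀ / 2)).congr (ae_of_all _ fun p => by ring)

theorem hasDerivAt_waveSuperposition_snd (ha : Integrable a μ) (hb : Integrable b μ)
    (ha' : Integrable (fun p => a p / p) μ) (hb' : Integrable (fun p => b p / p) μ)
    (φ T : ℝ) :
    HasDerivAt (fun T => waveSuperposition μ χ₀ a b φ T)
      (waveSuperposition μ χ₀ (fun p => -(χ₀ / (2 * p) * b p)) (fun p => χ₀ / (2 * p) * a p)
        φ T) T := by
  have hκa := ha'.const_div_two_mul χ₀
  have hκb := hb'.const_div_two_mul χ₀
  refine (hasDerivAt_integral_of_dominated_loc_of_deriv_le Filter.univ_mem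
    (F := fun T p => osc (a p) (b p) (wavePhase χ₀ p φ T))
    (F' := fun T p => osc (-(χ₀ / (2 * p) * b p)) (χ₀ / (2 * p) * a p) (wavePhase χ₀ p φ T))
    (bound := fun p => |χ₀ / (2 * p) * b p| + |χ₀ / (2 * p) * a p|)
    (.of_forall fun T => aestronglyMeasurable_osc ha.1 hb.1 (measurable_wavePhase χ₀ φ T))
    (integrable_osc ha hb (measurable_wavePhase χ₀ φ T))
    (aestronglyMeasurable_osc hκb.1.neg hκa.1 (measurable_wavePhase χ₀ φ T))
    (ae_of_all _ fun p T _ => ?_) (hκb.abs.add hκa.abs) (ae_of_all _ fun p T _ => ?_)).2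
  · simpa only [Real.norm_eq_abs, abs_neg] using
      abs_osc_le (-(χ₀ / (2 * p) * b p)) (χ₀ / (2 * p) * a p) _
  · exact ((hasDerivAt_osc (a p) (b p) _).comp T (hasDerivAt_wavePhase_snd χ₀ p φ T)).congr_deriv
      (by unfold osc; ring)

theorem hasDerivAt_deriv_waveSuperposition (h0 : ∀ᵐ p ∂μ, p ≠ 0) (ha : Integrable a μ)
    (hb : Integrable b μ) (ha' : Integrable (fun p => a p / p) μ)
    (hb' : Integrable (fun p => b p / p) μ) (φ T : ℝ) :
    HasDerivAt (fun φ => deriv (fun T => waveSuperposition μ χ₀ a b φ T) T)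
      (χ₀ / 2 * waveSuperposition μ χ₀ a b φ T) φ := by
  have hpκ : ∀ c : ℝ → ℝ, (fun p => χ₀ / 2 * c p) =ᵐ[μ] fun p => p * (χ₀ / (2 * p) * c p) :=
    fun c => h0.mono fun p hp => by field_simp
  have hderiv : (fun φ => deriv (fun T => waveSuperposition μ χ₀ a b φ T) T) = fun φ =>
      waveSuperposition μ χ₀ (fun p => -(χ₀ / (2 * p) * b p)) (fun p => χ₀ / (2 * p) * a p) φ T :=
    funext fun φ => (hasDerivAt_waveSuperposition_snd ha hb ha' hb' φ T).deriv
  have hpa : Integrable (fun p => p * (χ₀ / (2 * p) * a p)) μ :=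
    (ha.const_mul _).congr (hpκ a)
  have hpb : Integrable (fun p => p * -(χ₀ / (2 * p) * b p)) μ := by
    simpa only [mul_neg] using ((hb.const_mul _).congr (hpκ b)).fun_neg
  rw [hderiv, ← waveSuperposition_const_mul]
  convert hasDerivAt_waveSuperposition_fst (a := fun p => -(χ₀ / (2 * p) * b p))
    (hb'.const_div_two_mul χ₀).fun_neg (ha'.const_div_two_mul χ₀) hpb hpa φ T using 1
  refine waveSuperposition_congr_ae (hpκ a) ((hpκ b).mono fun p hp => ?_) φ T
  simp only [hp, mul_neg, neg_neg]

end Superposition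

section Dispersion

variable {χ₀ ε : ℝ} {h : ℝ → ℝ}

theorem le_omg (hχ₀ : 0 ≤ χ₀) (p : ℝ) : p ≤ omg χ₀ ε p :=
  (le_abs_self p).trans (Real.abs_le_sqrt (le_add_of_nonneg_right (by positivity)))

theorem measurable_omg : Measurable (omg χ₀ ε) := by
  unfold omg
  fun_prop

theorem integrableOn_div_omg_mul (hχ₀ : 0 ≤ χ₀) (hh : Continuous h)
    (hint : IntegrableOn (fun p => (1 + p) * |h (omg χ₀ ε p)|) (Ici √ε)) :
    IntegrableOn (fun p => p / omg χ₀ ε p * h (omg χ₀ ε p)) (Ioi √ε) := by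
  refine (hint.mono_set Ioi_subset_Ici_self).mono'
    ((measurable_id.div measurable_omg).mul
      (hh.measurable.comp measurable_omg)).aestronglyMeasurable
    (ae_restrict_of_forall_mem measurableSet_Ioi fun p hp => ?_)
  have hp : 0 < p := (Real.sqrt_nonneg ε).trans_lt hp
  have hω : p ≤ omg χ₀ ε p := le_omg hχ₀ p
  calc ‖p / omg χ₀ ε p * h (omg χ₀ ε p)‖ = p / omg χ₀ ε p * |h (omg χ₀ ε p)| := by
        rw [Real.norm_eq_abs, abs_mul, abs_of_nonneg (div_nonneg hp.le (hp.le.trans hω))]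
    _ ≤ 1 * |h (omg χ₀ ε p)| := by
        gcongr
        exact div_le_one_of_le₀ hω (hp.le.trans hω)
    _ ≤ (1 + p) * |h (omg χ₀ ε p)| := by gcongr; linarith

theorem integrableOn_div_omg_mul_div (hχ₀ : 0 ≤ χ₀) (hε : 0 < ε) (hh : Continuous h)
    (hint : IntegrableOn (fun p => (1 + p) * |h (omg χ₀ ε p)|) (Ici √ε)) :
    IntegrableOn (fun p => p / omg χ₀ ε p * h (omg χ₀ ε p) / p) (Ioi √ε) := by
  refine ((hint.mono_set Ioi_subset_Ici_self).const_mul (√ε)⁻¹).mono'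
    (((measurable_id.div measurable_omg).mul
      (hh.measurable.comp measurable_omg)).div measurable_id).aestronglyMeasurable
    (ae_restrict_of_forall_mem measurableSet_Ioi fun p (hpr : √ε < p) => ?_)
  have hr : 0 < √ε := Real.sqrt_pos.2 hε
  have hp : 0 < p := hr.trans hpr
  have hω : √ε ≤ omg χ₀ ε p := hpr.le.trans (le_omg hχ₀ p)
  calc ‖p / omg χ₀ ε p * h (omg χ₀ ε p) / p‖ = |h (omg χ₀ ε p)| / omg χ₀ ε p := by
        rw [Real.norm_eq_abs, abs_div, abs_mul, abs_div, abs_of_pos hp,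
          abs_of_pos (hr.trans_le hω)]
        field_simp
    _ ≤ |h (omg χ₀ ε p)| / √ε := div_le_div_of_nonneg_left (abs_nonneg _) hr hω
    _ ≤ (√ε)⁻¹ * ((1 + p) * |h (omg χ₀ ε p)|) := by
        rw [div_eq_inv_mul]
        gcongr
        exact le_mul_of_one_le_left (abs_nonneg _) (by linarith)

end Dispersion

/-- Lemma (the truncated oscillatory integral solves the linearized short-pulse
equation): under the stated integrability assumptions on `Chat, Shat`, the function
`𝒰(φ,T) = (1/π) ∫_{√ε}^∞ (p/ω_ε(p)) [cos(pφ − χ₀T/(2p)) Chat(ω_ε(p))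
+ sin(pφ − χ₀T/(2p)) Shat(ω_ε(p))] dp` is well defined, has continuous mixed partial
derivative `∂_φ∂_T 𝒰`, and satisfies `2 ∂_φ ∂_T 𝒰 = χ₀ 𝒰` everywhere. -/
theorem statement16 (χ₀ ε : ℝ) (hχ₀ : 0 < χ₀) (hε : 0 < ε)
    (Chat Shat : ℝ → ℝ) (hChat : Continuous Chat) (hShat : Continuous Shat)
    (hintC : IntegrableOn (fun p : ℝ => (1 + p) * |Chat (omg χ₀ ε p)|)
      (Ici (Real.sqrt ε)))
    (hintS : IntegrableOn (fun p : ℝ => (1 + p) * |Shat (omg χ₀ ε p)|)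
      (Ici (Real.sqrt ε))) :
    ∀ U : ℝ → ℝ → ℝ,
      (∀ φ T : ℝ, U φ T = (1 / Real.pi) *
        ∫ p in Ioi (Real.sqrt ε), (p / omg χ₀ ε p) *
          (Real.cos (p * φ - χ₀ * T / (2 * p)) * Chat (omg χ₀ ε p)
            + Real.sin (p * φ - χ₀ * T / (2 * p)) * Shat (omg χ₀ ε p))) →
      -- the defining integrand is integrable (the integral is well defined)
      (∀ φ T : ℝ, IntegrableOn (fun p : ℝ => (p / omg χ₀ ε p) *
          (Real.cos (p * φ - χ₀ * T / (2 * p)) * Chat (omg χ₀ ε p)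
            + Real.sin (p * φ - χ₀ * T / (2 * p)) * Shat (omg χ₀ ε p)))
          (Ioi (Real.sqrt ε))) ∧
      -- the inner (T-) derivative exists
      (∀ φ T : ℝ, DifferentiableAt ℝ (fun T' : ℝ => U φ T') T) ∧
      -- the mixed partial derivative exists
      (∀ T φ : ℝ, DifferentiableAt ℝ (fun φ' : ℝ => deriv (fun T' : ℝ => U φ' T') T) φ) ∧
      -- and is continuous as a function of (φ, T)
      Continuous (fun q : ℝ × ℝ =>
        deriv (fun φ' : ℝ => deriv (fun T' : ℝ => U φ' T') q.2) q.1) ∧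
      -- the linearized short-pulse equation holds
      (∀ φ T : ℝ,
        2 * deriv (fun φ' : ℝ => deriv (fun T' : ℝ => U φ' T') T) φ = χ₀ * U φ T) := by
  intro U hU
  set μ := volume.restrict (Ioi √ε)
  set a := fun p => p / omg χ₀ ε p * Chat (omg χ₀ ε p)
  set b := fun p => p / omg χ₀ ε p * Shat (omg χ₀ ε p)
  have ha : Integrable a μ := integrableOn_div_omg_mul hχ₀.le hChat hintC
  have hb : Integrable b μ := integrableOn_div_omg_mul hχ₀.le hShat hintS
  set A := fun p => Real.pi⁻¹ * a p
  set B := fun p => Real.pi⁻¹ * b p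
  have hA : Integrable A μ := ha.const_mul _
  have hB : Integrable B μ := hb.const_mul _
  have hA' : Integrable (fun p => A p / p) μ :=
    ((integrableOn_div_omg_mul_div hχ₀.le hε hChat hintC).const_mul _).congr
      (ae_of_all _ fun p => (mul_div_assoc _ _ _).symm)
  have hB' : Integrable (fun p => B p / p) μ :=
    ((integrableOn_div_omg_mul_div hχ₀.le hε hShat hintS).const_mul _).congr
      (ae_of_all _ fun p => (mul_div_assoc _ _ _).symm)
  have h0 : ∀ᵐ p ∂μ, p ≠ 0 := ae_restrict_of_forall_mem measurableSet_Ioi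
    fun p hp => ((Real.sqrt_nonneg ε).trans_lt hp).ne'
  have hUW : U = waveSuperposition μ χ₀ A B := by
    funext φ T
    rw [hU, waveSuperposition_const_mul, one_div]
    congr 2 with p
    simp only [osc, wavePhase, a, b]
    ring
  subst hUW
  have hmixed := hasDerivAt_deriv_waveSuperposition (χ₀ := χ₀) h0 hA hB hA' hB'
  refine ⟨fun φ T => ?_,
    fun φ T => (hasDerivAt_waveSuperposition_snd hA hB hA' hB' φ T).differentiableAt,
    fun T φ => (hmixed φ T).differentiableAt, ?_, fun φ T => ?_⟩
  · refine (integrable_osc ha hb (measurable_wavePhase χ₀ φ T)).congr (ae_of_all _ fun p => ?_)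
    simp only [osc, wavePhase, a, b]
    ring
  · simp only [fun q : ℝ × ℝ => (hmixed q.1 q.2).deriv]
    exact continuous_const.mul (continuous_waveSuperposition hA hB)
  · rw [(hmixed φ T).deriv]
    ring
end
end
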